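/- Let (M, K) be a Grothendieck–Verdier category with duality functor D. For Y₁, Y₂ ∈ M let u_{Y₁,Y₂} : D²(Y₁ ⊗ Y₂) ≅ D²Y₁ ⊗ D²Y₂ be the unique natural isomorphism such that for all X the induced map Hom(D²(Y₁⊗Y₂) ⊗ X, K) → Hom(D²Y₁ ⊗ D²Y₂ ⊗ X, K) agrees with the isomorphism obtained by composing g^{-1}_{X, Y₁⊗Y₂} : Hom(D²(Y₁⊗Y₂)⊗X, K) ≅ Hom(X⊗Y₁⊗Y₂, K) with g applied twice: Hom((X⊗Y₁)⊗Y₂, K) ≅ Hom(D²Y₂ ⊗ X ⊗ Y₁, K) ≅ Hom(D²Y₁ ⊗ D²Y₂ ⊗ X, K). Then u defines a monoidal structure on the functor D² : M → M (i.e., u is compatible with the associativity constraints and the unit), and the corresponding isomorphism 1 ≅ D²(1) equals the canonical one. -/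

import Mathlib

open CategoryTheory Opposite MonoidalCategory

universe v u

/-- A Grothendieck–Verdier category structure on a monoidal category `M`:
a dualizing object `K`, the duality anti-equivalence `D`, and the natural
family of bijections `Hom(X ⊗ Y, K) ≃ Hom(X, D Y)`. -/
structure GVCat (M : Type u) [Category.{v} M] [MonoidalCategory M] where
  K : M
  D : Mᵒᵖ ≌ M
  homEquiv : ∀ X Y : M, (X ⊗ Y ⟶ K) ≃ (X ⟶ D.functor.obj (op Y))
  homEquiv_natX : ∀ {X X' : M} (Y : M) (f : X' ⟶ X) (h : X ⊗ Y ⟶ K),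
    homEquiv X' Y (f ▷ Y ≫ h) = f ≫ homEquiv X Y h
  homEquiv_natY : ∀ (X : M) {Y Y' : M} (g : Y' ⟶ Y) (h : X ⊗ Y ⟶ K),
    homEquiv X Y' (X ◁ g ≫ h) = homEquiv X Y h ≫ D.functor.map g.op

namespace GVCat

variable {M : Type u} [Category.{v} M] [MonoidalCategory M] (G : GVCat M)

/-- The duality functor on objects: `D Y`. -/
abbrev d (Y : M) : M := G.D.functor.obj (op Y)

/-- The inverse duality functor on objects: `D⁻¹ X`. -/
abbrev dinv (X : M) : M := (G.D.inverse.obj X).unop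

/-- The duality functor on morphisms. -/
abbrev dmap {A B : M} (f : A ⟶ B) : G.d B ⟶ G.d A := G.D.functor.map f.op

/-- The inverse duality functor on morphisms. -/
abbrev dinvmap {A B : M} (f : A ⟶ B) : G.dinv B ⟶ G.dinv A := (G.D.inverse.map f).unop

/-- `D² Y`. -/
abbrev dd (Y : M) : M := G.d (G.d Y)

/-- `D²` as a covariant endofunctor of `M`. -/
def ddF : M ⥤ M := G.D.functor.rightOp ⋙ G.D.functor

/-- The second defining natural bijection `Hom(X ⊗ Y, K) ≃ Hom(Y, D⁻¹ X)`. -/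
def homEquiv' (X Y : M) : (X ⊗ Y ⟶ G.K) ≃ (Y ⟶ G.dinv X) :=
  (G.homEquiv X Y).trans
    ((G.D.symm.toAdjunction.homEquiv X (op Y)).symm.trans (opEquiv _ _))

/-- The canonical isomorphism `D⁻¹ (D X) ≅ X`. -/
def dinvD (X : M) : G.dinv (G.d X) ≅ X := (G.D.unitIso.app (op X)).unop

/-- The canonical isomorphism `D (D⁻¹ X) ≅ X`. -/
def dDinv (X : M) : G.d (G.dinv X) ≅ X := G.D.counitIso.app X

/-- The canonical natural bijection `g : Hom(X ⊗ Y, K) ≃ Hom(D²Y ⊗ X, K)`. -/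
def g (X Y : M) : (X ⊗ Y ⟶ G.K) ≃ (G.dd Y ⊗ X ⟶ G.K) :=
  ((G.homEquiv X Y).trans ((Iso.refl X).homCongr (G.dinvD (G.d Y)).symm)).trans
    (G.homEquiv' (G.dd Y) X).symm

end GVCat

namespace GVCat

variable {M : Type u} [Category.{v} M] [MonoidalCategory M] (G : GVCat M)

/-- The composite bijection
`Hom(D²(Y₁⊗Y₂) ⊗ X, K) ≃ Hom((D²Y₁ ⊗ D²Y₂) ⊗ X, K)` obtained from `g⁻¹` followed by two
applications of `g` (with the associativity constraints inserted). -/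
def gchain (Y₁ Y₂ X : M) :
    (G.dd (Y₁ ⊗ Y₂) ⊗ X ⟶ G.K) ≃ ((G.dd Y₁ ⊗ G.dd Y₂) ⊗ X ⟶ G.K) :=
  (G.g X (Y₁ ⊗ Y₂)).symm.trans <|
    ((α_ X Y₁ Y₂).symm.homCongr (Iso.refl G.K)).trans <|
      (G.g (X ⊗ Y₁) Y₂).trans <|
        ((α_ (G.dd Y₂) X Y₁).symm.homCongr (Iso.refl G.K)).trans <|
          (G.g (G.dd Y₂ ⊗ X) Y₁).trans
            ((α_ (G.dd Y₁) (G.dd Y₂) X).symm.homCongr (Iso.refl G.K))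

/-- The characterizing property of the canonical isomorphisms
`u : D²(Y₁ ⊗ Y₂) ≅ D²Y₁ ⊗ D²Y₂`. -/
def UChar (u : ∀ Y₁ Y₂ : M, G.dd (Y₁ ⊗ Y₂) ≅ G.dd Y₁ ⊗ G.dd Y₂) : Prop :=
  ∀ (Y₁ Y₂ X : M) (h : G.dd (Y₁ ⊗ Y₂) ⊗ X ⟶ G.K),
    ((u Y₁ Y₂).inv ▷ X) ≫ h = G.gchain Y₁ Y₂ X h

/-- The characterizing property of the canonical morphism `η : 𝟙 ⟶ D² 𝟙`. -/
def EtaChar (η : 𝟙_ M ⟶ G.dd (𝟙_ M)) : Prop :=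
  ∀ (X : M) (h : X ⊗ 𝟙_ M ⟶ G.K),
    (η ▷ X) ≫ G.g X (𝟙_ M) h = (λ_ X).hom ≫ (ρ_ X).inv ≫ h

end GVCat

namespace GVCat

variable {M : Type u} [Category.{v} M] [MonoidalCategory M] (G : GVCat M)

-- ==== auxiliary lemmas ====

lemma homEquiv'_apply (A X : M) (k : A ⊗ X ⟶ G.K) :
    G.homEquiv' A X k
      = ((G.D.symm.toAdjunction.homEquiv A (op X)).symm (G.homEquiv A X k)).unop := rfl

lemma homEquiv'_natX (A : M) {X X' : M} (f : X' ⟶ X) (h : A ⊗ X ⟶ G.K) :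
    G.homEquiv' A X' (A ◁ f ≫ h) = f ≫ G.homEquiv' A X h := by
  rw [homEquiv'_apply, homEquiv'_apply, G.homEquiv_natY,
    show G.D.functor.map f.op = G.D.symm.inverse.map f.op from rfl,
    G.D.symm.toAdjunction.homEquiv_naturality_right_symm]
  rfl

lemma homEquiv'_natA {A A' : M} (X : M) (f : A' ⟶ A) (h : A ⊗ X ⟶ G.K) :
    G.homEquiv' A' X (f ▷ X ≫ h) = G.homEquiv' A X h ≫ G.dinvmap f := by
  rw [homEquiv'_apply, homEquiv'_apply, G.homEquiv_natX,
    G.D.symm.toAdjunction.homEquiv_naturality_left_symm]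
  rfl

def eps (B : M) : B ⊗ G.dinv B ⟶ G.K := (G.homEquiv' B (G.dinv B)).symm (𝟙 _)

lemma eps_repro (B : M) {X : M} (k : B ⊗ X ⟶ G.K) :
    B ◁ (G.homEquiv' B X k) ≫ G.eps B = k := by
  apply (G.homEquiv' B X).injective
  rw [G.homEquiv'_natX, eps, Equiv.apply_symm_apply, Category.comp_id]

lemma homEquiv_eps (B : M) :
    G.homEquiv B (G.dinv B) (G.eps B) = (G.dDinv B).inv := by
  have h0 : G.homEquiv' B (G.dinv B) (G.eps B) = 𝟙 _ := Equiv.apply_symm_apply _ _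
  rw [homEquiv'_apply] at h0
  have h1 : (G.D.symm.toAdjunction.homEquiv B (op (G.dinv B))).symm
      (G.homEquiv B (G.dinv B) (G.eps B)) = 𝟙 _ := Quiver.Hom.unop_inj h0
  have h2 := congrArg (G.D.symm.toAdjunction.homEquiv B (op (G.dinv B))) h1
  rw [Equiv.apply_symm_apply, Adjunction.homEquiv_unit] at h2
  rw [h2]
  simp [dDinv, Equivalence.toAdjunction]


lemma hom_ext {A B : M} {f f' : A ⟶ B}
    (H : ∀ (X : M) (k : B ⊗ X ⟶ G.K), f ▷ X ≫ k = f' ▷ X ≫ k) : f = f' := by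
  have h1 := H (G.dinv B) (G.eps B)
  have e1 := G.homEquiv_natX (G.dinv B) f (G.eps B)
  have e2 := G.homEquiv_natX (G.dinv B) f' (G.eps B)
  rw [h1, e2, G.homEquiv_eps] at e1
  have := e1.symm.trans rfl
  calc f = (f ≫ (G.dDinv B).inv) ≫ (G.dDinv B).hom := by simp
    _ = (f' ≫ (G.dDinv B).inv) ≫ (G.dDinv B).hom := by rw [e1]
    _ = f' := by simp

lemma corep {A B : M} (t : ∀ X : M, (B ⊗ X ⟶ G.K) → (A ⊗ X ⟶ G.K))
    (ht : ∀ {X X' : M} (f : X' ⟶ X) (k : B ⊗ X ⟶ G.K),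
      t X' (B ◁ f ≫ k) = A ◁ f ≫ t X k) :
    ∃ f₀ : A ⟶ B, ∀ (X : M) (k : B ⊗ X ⟶ G.K), f₀ ▷ X ≫ k = t X k := by
  refine ⟨G.homEquiv A (G.dinv B) (t _ (G.eps B)) ≫ (G.dDinv B).hom, ?_⟩
  have key : (G.homEquiv A (G.dinv B) (t _ (G.eps B)) ≫ (G.dDinv B).hom) ▷ (G.dinv B)
      ≫ G.eps B = t _ (G.eps B) := by
    apply (G.homEquiv A (G.dinv B)).injective
    rw [G.homEquiv_natX, G.homEquiv_eps]
    simp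
  intro X k
  have hk := G.eps_repro B k
  conv_lhs => rw [← hk]
  rw [← Category.assoc, ← whisker_exchange, Category.assoc, key, ← ht, hk]

lemma g_apply (X Y : M) (h : X ⊗ Y ⟶ G.K) :
    G.g X Y h
      = (G.homEquiv' (G.dd Y) X).symm
          (G.homEquiv X Y h ≫ (G.dinvD (G.d Y)).inv) := by
  simp [g, Iso.homCongr]

lemma g_natX {X X' : M} (Y : M) (f : X' ⟶ X) (h : X ⊗ Y ⟶ G.K) :
    G.g X' Y (f ▷ Y ≫ h) = G.dd Y ◁ f ≫ G.g X Y h := by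
  apply (G.homEquiv' (G.dd Y) X').injective
  rw [g_apply, g_apply, Equiv.apply_symm_apply, G.homEquiv'_natX,
    Equiv.apply_symm_apply, G.homEquiv_natX, Category.assoc]

lemma dinvD_natural {Y Y' : M} (q : Y' ⟶ Y) :
    G.dmap q ≫ (G.dinvD (G.d Y')).inv
      = (G.dinvD (G.d Y)).inv ≫ G.dinvmap (G.ddF.map q) := by
  have h := congrArg Quiver.Hom.unop (G.D.unitIso.inv.naturality ((G.dmap q).op))
  exact h.symm

lemma g_natY (X : M) {Y Y' : M} (q : Y' ⟶ Y) (h : X ⊗ Y ⟶ G.K) :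
    G.g X Y' (X ◁ q ≫ h) = G.ddF.map q ▷ X ≫ G.g X Y h := by
  apply (G.homEquiv' (G.dd Y') X).injective
  erw [g_apply, g_apply, Equiv.apply_symm_apply,
    G.homEquiv'_natA (A := G.dd Y) (A' := G.dd Y') X (G.ddF.map q),
    Equiv.apply_symm_apply, G.homEquiv_natY, Category.assoc, Category.assoc,
    G.dinvD_natural]
  rfl

lemma g_natX_symm {X X' : M} (Y : M) (f : X' ⟶ X) (k : G.dd Y ⊗ X ⟶ G.K) :
    (G.g X' Y).symm (G.dd Y ◁ f ≫ k) = f ▷ Y ≫ (G.g X Y).symm k := by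
  apply (G.g X' Y).injective
  rw [Equiv.apply_symm_apply, G.g_natX, Equiv.apply_symm_apply]

lemma g_natY_symm (X : M) {Y Y' : M} (q : Y' ⟶ Y) (k : G.dd Y ⊗ X ⟶ G.K) :
    (G.g X Y').symm (G.ddF.map q ▷ X ≫ k) = X ◁ q ≫ (G.g X Y).symm k := by
  apply (G.g X Y').injective
  rw [Equiv.apply_symm_apply, G.g_natY, Equiv.apply_symm_apply]
  rfl


lemma gchain_apply (Y₁ Y₂ X : M) (h : G.dd (Y₁ ⊗ Y₂) ⊗ X ⟶ G.K) :
    G.gchain Y₁ Y₂ X h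
      = (α_ (G.dd Y₁) (G.dd Y₂) X).hom
          ≫ G.g (G.dd Y₂ ⊗ X) Y₁ ((α_ (G.dd Y₂) X Y₁).hom
            ≫ G.g (X ⊗ Y₁) Y₂ ((α_ X Y₁ Y₂).hom
              ≫ (G.g X (Y₁ ⊗ Y₂)).symm h)) := by
  simp only [gchain, Equiv.trans_apply, Iso.homCongr_apply, Iso.symm_inv,
    Iso.refl_hom, Category.comp_id, Iso.symm_hom]


lemma ddF_pull {Y Z : M} (q : Y ⟶ Z) (W : M) (h : G.dd Z ⊗ W ⟶ G.K) :
    G.ddF.map q ▷ W ≫ h = G.g W Y (W ◁ q ≫ (G.g W Z).symm h) := by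
  rw [G.g_natY, Equiv.apply_symm_apply]

lemma u_nat (u : ∀ Y₁ Y₂ : M, G.dd (Y₁ ⊗ Y₂) ≅ G.dd Y₁ ⊗ G.dd Y₂)
    (hu : ∀ (Y₁ Y₂ X : M) (h : G.dd (Y₁ ⊗ Y₂) ⊗ X ⟶ G.K),
      ((u Y₁ Y₂).inv ▷ X) ≫ h = G.gchain Y₁ Y₂ X h)
    {Y₁ Y₂ Z₁ Z₂ : M} (q₁ : Y₁ ⟶ Z₁) (q₂ : Y₂ ⟶ Z₂) :
    G.ddF.map (q₁ ⊗ₘ q₂) ≫ (u Z₁ Z₂).hom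
      = (u Y₁ Y₂).hom ≫ (G.ddF.map q₁ ⊗ₘ G.ddF.map q₂) := by
  have E : (u Y₁ Y₂).inv ≫ G.ddF.map (q₁ ⊗ₘ q₂)
      = (G.ddF.map q₁ ⊗ₘ G.ddF.map q₂) ≫ (u Z₁ Z₂).inv := by
    apply G.hom_ext; intro W h
    erw [comp_whiskerRight, comp_whiskerRight, Category.assoc, Category.assoc,
      G.ddF_pull (q₁ ⊗ₘ q₂) W h, hu Y₁ Y₂ W, hu Z₁ Z₂ W,
      G.gchain_apply, G.gchain_apply, Equiv.symm_apply_apply]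
    rw [show (α_ W Y₁ Y₂).hom ≫ (W ◁ (q₁ ⊗ₘ q₂) ≫ (G.g W (Z₁ ⊗ Z₂)).symm h)
        = (W ◁ q₁) ▷ Y₂ ≫ ((W ⊗ Z₁ : M) ◁ q₂
            ≫ ((α_ W Z₁ Z₂).hom ≫ (G.g W (Z₁ ⊗ Z₂)).symm h)) from by
      rw [MonoidalCategory.tensorHom_def]; monoidal]
    rw [G.g_natX, G.g_natY]
    erw [show (α_ (G.dd Y₂) W Y₁).hom ≫ (G.dd Y₂ ◁ (W ◁ q₁)
            ≫ (G.ddF.map q₂ ▷ (W ⊗ Z₁)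
              ≫ G.g (W ⊗ Z₁) Z₂ ((α_ W Z₁ Z₂).hom ≫ (G.g W (Z₁ ⊗ Z₂)).symm h)))
        = (G.ddF.map q₂ ▷ W) ▷ Y₁ ≫ ((G.ddF.obj Z₂ ⊗ W) ◁ q₁
            ≫ ((α_ (G.dd Z₂) W Z₁).hom
              ≫ G.g (W ⊗ Z₁) Z₂ ((α_ W Z₁ Z₂).hom ≫ (G.g W (Z₁ ⊗ Z₂)).symm h))) from by
      calc _ = (G.ddF.obj Y₂ ⊗ W) ◁ q₁ ≫ (G.ddF.map q₂ ▷ W) ▷ Z₁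
              ≫ (α_ (G.dd Z₂) W Z₁).hom
              ≫ G.g (W ⊗ Z₁) Z₂ ((α_ W Z₁ Z₂).hom ≫ (G.g W (Z₁ ⊗ Z₂)).symm h) := by
            monoidal
        _ = _ := by rw [← Category.assoc, whisker_exchange, Category.assoc]]
    erw [G.g_natX, G.g_natY]
    rw [MonoidalCategory.tensorHom_def']
    monoidal
  calc _
      = (u Y₁ Y₂).hom ≫ ((u Y₁ Y₂).inv ≫ G.ddF.map (q₁ ⊗ₘ q₂)) ≫ (u Z₁ Z₂).hom := by
        erw [Category.assoc, Iso.hom_inv_id_assoc]; rfl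
    _ = _ := by rw [E]; erw [Category.assoc, Iso.inv_hom_id, Category.comp_id]; rfl

lemma eta_iso (η : 𝟙_ M ⟶ G.dd (𝟙_ M))
    (hη : ∀ (X : M) (h : X ⊗ 𝟙_ M ⟶ G.K),
      (η ▷ X) ≫ G.g X (𝟙_ M) h = (λ_ X).hom ≫ (ρ_ X).inv ≫ h) : IsIso η := by
  obtain ⟨η', hη'⟩ := G.corep (A := G.dd (𝟙_ M)) (B := 𝟙_ M)
    (fun X k => G.g X (𝟙_ M) ((ρ_ X).hom ≫ (λ_ X).inv ≫ k))
    (by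
      intro X X' f k
      have e1 : (ρ_ X').hom ≫ (λ_ X').inv ≫ (𝟙_ M ◁ f ≫ k)
          = f ▷ 𝟙_ M ≫ (ρ_ X).hom ≫ (λ_ X).inv ≫ k := by
        rw [← Category.assoc, ← Category.assoc, ← Category.assoc, ← Category.assoc]
        congr 1
        monoidal
      rw [e1, G.g_natX])
  refine ⟨η', ?_, ?_⟩
  · apply G.hom_ext; intro X k
    rw [comp_whiskerRight, Category.assoc, hη' X k, hη X, id_whiskerRight,
      Category.id_comp]
    simp
  · apply G.hom_ext; intro X k
    rw [comp_whiskerRight, Category.assoc, id_whiskerRight, Category.id_comp]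
    conv_lhs => rw [← Equiv.apply_symm_apply (G.g X (𝟙_ M)) k]
    rw [hη X, hη' X]
    conv_rhs => rw [← Equiv.apply_symm_apply (G.g X (𝟙_ M)) k]
    congr 1
    simp

lemma left_unit (u : ∀ Y₁ Y₂ : M, G.dd (Y₁ ⊗ Y₂) ≅ G.dd Y₁ ⊗ G.dd Y₂)
    (hu : ∀ (Y₁ Y₂ X : M) (h : G.dd (Y₁ ⊗ Y₂) ⊗ X ⟶ G.K),
      ((u Y₁ Y₂).inv ▷ X) ≫ h = G.gchain Y₁ Y₂ X h)
    (η : 𝟙_ M ⟶ G.dd (𝟙_ M))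
    (hη : ∀ (X : M) (h : X ⊗ 𝟙_ M ⟶ G.K),
      (η ▷ X) ≫ G.g X (𝟙_ M) h = (λ_ X).hom ≫ (ρ_ X).inv ≫ h)
    (X : M) :
    (λ_ (G.dd X)).hom = (η ▷ G.dd X) ≫ (u (𝟙_ M) X).inv ≫ G.ddF.map (λ_ X).hom := by
  apply G.hom_ext; intro W h
  erw [comp_whiskerRight, comp_whiskerRight, Category.assoc, Category.assoc,
    G.ddF_pull (λ_ X).hom W h, hu (𝟙_ M) X W, G.gchain_apply, Equiv.symm_apply_apply]
  rw [show (α_ W (𝟙_ M) X).hom ≫ W ◁ (λ_ X).hom ≫ (G.g W X).symm h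
      = (ρ_ W).hom ▷ X ≫ (G.g W X).symm h from by monoidal]
  rw [G.g_natX, Equiv.apply_symm_apply]
  rw [show (α_ (G.dd X) W (𝟙_ M)).hom ≫ (G.dd X ◁ (ρ_ W).hom ≫ h)
      = (ρ_ (G.dd X ⊗ W)).hom ≫ h from by monoidal]
  rw [show η ▷ G.dd X ▷ W ≫ (α_ (G.dd (𝟙_ M)) (G.dd X) W).hom
        ≫ (G.g (G.dd X ⊗ W) (𝟙_ M)) ((ρ_ (G.dd X ⊗ W)).hom ≫ h)
      = (α_ (𝟙_ M) (G.dd X) W).hom ≫ η ▷ (G.dd X ⊗ W)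
        ≫ (G.g (G.dd X ⊗ W) (𝟙_ M)) ((ρ_ (G.dd X ⊗ W)).hom ≫ h) from by monoidal]
  rw [hη (G.dd X ⊗ W)]
  simp only [Iso.inv_hom_id_assoc]
  monoidal

lemma right_unit (u : ∀ Y₁ Y₂ : M, G.dd (Y₁ ⊗ Y₂) ≅ G.dd Y₁ ⊗ G.dd Y₂)
    (hu : ∀ (Y₁ Y₂ X : M) (h : G.dd (Y₁ ⊗ Y₂) ⊗ X ⟶ G.K),
      ((u Y₁ Y₂).inv ▷ X) ≫ h = G.gchain Y₁ Y₂ X h)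
    (η : 𝟙_ M ⟶ G.dd (𝟙_ M)) [IsIso η]
    (hη : ∀ (X : M) (h : X ⊗ 𝟙_ M ⟶ G.K),
      (η ▷ X) ≫ G.g X (𝟙_ M) h = (λ_ X).hom ≫ (ρ_ X).inv ≫ h)
    (X : M) :
    (ρ_ (G.dd X)).hom = (G.dd X ◁ η) ≫ (u X (𝟙_ M)).inv ≫ G.ddF.map (ρ_ X).hom := by
  have gρ : ∀ (A : M) (k : A ⟶ G.K), G.g A (𝟙_ M) ((ρ_ A).hom ≫ k)
      = inv η ▷ A ≫ (λ_ A).hom ≫ k := by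
    intro A k
    calc G.g A (𝟙_ M) ((ρ_ A).hom ≫ k)
        = inv η ▷ A ≫ (η ▷ A ≫ G.g A (𝟙_ M) ((ρ_ A).hom ≫ k)) := by
          rw [← Category.assoc, ← comp_whiskerRight, IsIso.inv_hom_id,
            id_whiskerRight, Category.id_comp]
      _ = inv η ▷ A ≫ ((λ_ A).hom ≫ (ρ_ A).inv ≫ (ρ_ A).hom ≫ k) := by rw [hη]
      _ = _ := by simp
  apply G.hom_ext; intro W h
  erw [comp_whiskerRight, comp_whiskerRight, Category.assoc, Category.assoc,
    G.ddF_pull (ρ_ X).hom W h, hu X (𝟙_ M) W, G.gchain_apply, Equiv.symm_apply_apply]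
  rw [show (α_ W X (𝟙_ M)).hom ≫ W ◁ (ρ_ X).hom ≫ (G.g W X).symm h
      = (ρ_ (W ⊗ X)).hom ≫ (G.g W X).symm h from by monoidal]
  rw [gρ (W ⊗ X)]
  rw [show (α_ (G.dd (𝟙_ M)) W X).hom ≫ inv η ▷ (W ⊗ X) ≫ (λ_ (W ⊗ X)).hom
        ≫ (G.g W X).symm h
      = (inv η ▷ W ≫ (λ_ W).hom) ▷ X ≫ (G.g W X).symm h from by monoidal]
  rw [G.g_natX, Equiv.apply_symm_apply]
  rw [show (G.dd X ◁ η) ▷ W ≫ (α_ (G.dd X) (G.dd (𝟙_ M)) W).hom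
        ≫ (G.dd X ◁ (inv η ▷ W ≫ (λ_ W).hom) ≫ h)
      = (α_ (G.dd X) (𝟙_ M) W).hom ≫ G.dd X ◁ (η ▷ W)
        ≫ G.dd X ◁ (inv η ▷ W) ≫ G.dd X ◁ (λ_ W).hom ≫ h from by monoidal]
  rw [show G.dd X ◁ (η ▷ W) ≫ G.dd X ◁ (inv η ▷ W) ≫ G.dd X ◁ (λ_ W).hom ≫ h
      = G.dd X ◁ (λ_ W).hom ≫ h from by
    rw [← Category.assoc, ← MonoidalCategory.whiskerLeft_comp,
      ← comp_whiskerRight, IsIso.hom_inv_id, id_whiskerRight,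
      MonoidalCategory.whiskerLeft_id, Category.id_comp]]
  monoidal

set_option maxHeartbeats 2000000 in
lemma assoc_compat (u : ∀ Y₁ Y₂ : M, G.dd (Y₁ ⊗ Y₂) ≅ G.dd Y₁ ⊗ G.dd Y₂)
    (hu : ∀ (Y₁ Y₂ X : M) (h : G.dd (Y₁ ⊗ Y₂) ⊗ X ⟶ G.K),
      ((u Y₁ Y₂).inv ▷ X) ≫ h = G.gchain Y₁ Y₂ X h)
    (X Y Z : M) :
    (u (X ⊗ Y) Z).hom ≫ ((u X Y).hom ▷ G.dd Z)
        ≫ (α_ (G.dd X) (G.dd Y) (G.dd Z)).hom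
      = G.ddF.map (α_ X Y Z).hom ≫ (u X (Y ⊗ Z)).hom ≫ (G.dd X ◁ (u Y Z).hom) := by
  have E : (α_ (G.dd X) (G.dd Y) (G.dd Z)).inv ≫ ((u X Y).inv ▷ G.dd Z)
        ≫ (u (X ⊗ Y) Z).inv
      = (G.dd X ◁ (u Y Z).inv) ≫ (u X (Y ⊗ Z)).inv ≫ G.ddF.map (α_ X Y Z).inv := by
    apply G.hom_ext; intro W h
    rw [comp_whiskerRight, comp_whiskerRight, Category.assoc, Category.assoc,
      hu (X ⊗ Y) Z W h, G.gchain_apply]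
    erw [comp_whiskerRight, comp_whiskerRight, Category.assoc, Category.assoc,
      G.ddF_pull (α_ X Y Z).inv W h, hu X (Y ⊗ Z) W, G.gchain_apply,
      Equiv.symm_apply_apply]
    -- LHS: slide (u X Y).inv past the associator and apply hu
    rw [show (α_ (G.dd X) (G.dd Y) (G.dd Z)).inv ▷ W ≫ ((u X Y).inv ▷ G.dd Z) ▷ W
          ≫ (α_ (G.dd (X ⊗ Y)) (G.dd Z) W).hom
          ≫ (G.g (G.dd Z ⊗ W) (X ⊗ Y)) ((α_ (G.dd Z) W (X ⊗ Y)).hom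
            ≫ (G.g (W ⊗ X ⊗ Y) Z) ((α_ W (X ⊗ Y) Z).hom
              ≫ (G.g W ((X ⊗ Y) ⊗ Z)).symm h))
        = (α_ (G.dd X) (G.dd Y) (G.dd Z)).inv ▷ W
          ≫ (α_ (G.dd X ⊗ G.dd Y) (G.dd Z) W).hom
          ≫ (u X Y).inv ▷ (G.dd Z ⊗ W)
          ≫ (G.g (G.dd Z ⊗ W) (X ⊗ Y)) ((α_ (G.dd Z) W (X ⊗ Y)).hom
            ≫ (G.g (W ⊗ X ⊗ Y) Z) ((α_ W (X ⊗ Y) Z).hom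
              ≫ (G.g W ((X ⊗ Y) ⊗ Z)).symm h)) from by monoidal]
    rw [hu X Y (G.dd Z ⊗ W), G.gchain_apply, Equiv.symm_apply_apply]
    -- RHS: slide (u Y Z).inv inside and apply hu
    rw [show (G.dd X ◁ (u Y Z).inv) ▷ W ≫ (α_ (G.dd X) (G.dd (Y ⊗ Z)) W).hom
          ≫ (G.g (G.dd (Y ⊗ Z) ⊗ W) X) ((α_ (G.dd (Y ⊗ Z)) W X).hom
            ≫ (G.g (W ⊗ X) (Y ⊗ Z)) ((α_ W X (Y ⊗ Z)).hom
              ≫ W ◁ (α_ X Y Z).inv ≫ (G.g W ((X ⊗ Y) ⊗ Z)).symm h))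
        = (α_ (G.dd X) (G.dd Y ⊗ G.dd Z) W).hom
          ≫ G.dd X ◁ ((u Y Z).inv ▷ W)
          ≫ (G.g (G.dd (Y ⊗ Z) ⊗ W) X) ((α_ (G.dd (Y ⊗ Z)) W X).hom
            ≫ (G.g (W ⊗ X) (Y ⊗ Z)) ((α_ W X (Y ⊗ Z)).hom
              ≫ W ◁ (α_ X Y Z).inv ≫ (G.g W ((X ⊗ Y) ⊗ Z)).symm h)) from by monoidal]
    rw [← G.g_natX]
    rw [show ((u Y Z).inv ▷ W) ▷ X ≫ (α_ (G.dd (Y ⊗ Z)) W X).hom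
          ≫ (G.g (W ⊗ X) (Y ⊗ Z)) ((α_ W X (Y ⊗ Z)).hom
            ≫ W ◁ (α_ X Y Z).inv ≫ (G.g W ((X ⊗ Y) ⊗ Z)).symm h)
        = (α_ (G.dd Y ⊗ G.dd Z) W X).hom ≫ (u Y Z).inv ▷ (W ⊗ X)
          ≫ (G.g (W ⊗ X) (Y ⊗ Z)) ((α_ W X (Y ⊗ Z)).hom
            ≫ W ◁ (α_ X Y Z).inv ≫ (G.g W ((X ⊗ Y) ⊗ Z)).symm h) from by monoidal]
    rw [hu Y Z (W ⊗ X), G.gchain_apply, Equiv.symm_apply_apply]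
    -- transport the innermost g on the LHS
    rw [show (α_ W (X ⊗ Y) Z).hom ≫ (G.g W ((X ⊗ Y) ⊗ Z)).symm h
        = (α_ W X Y).inv ▷ Z ≫ ((α_ (W ⊗ X) Y Z).hom ≫ (α_ W X (Y ⊗ Z)).hom
            ≫ W ◁ (α_ X Y Z).inv ≫ (G.g W ((X ⊗ Y) ⊗ Z)).symm h) from by monoidal]
    rw [G.g_natX]
    -- transport the middle g on the LHS
    rw [show (α_ (G.dd Z ⊗ W) X Y).hom ≫ (α_ (G.dd Z) W (X ⊗ Y)).hom
          ≫ G.dd Z ◁ (α_ W X Y).inv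
          ≫ G.g ((W ⊗ X) ⊗ Y) Z ((α_ (W ⊗ X) Y Z).hom ≫ (α_ W X (Y ⊗ Z)).hom
            ≫ W ◁ (α_ X Y Z).inv ≫ (G.g W ((X ⊗ Y) ⊗ Z)).symm h)
        = (α_ (G.dd Z) W X).hom ▷ Y ≫ ((α_ (G.dd Z) (W ⊗ X) Y).hom
          ≫ G.g ((W ⊗ X) ⊗ Y) Z ((α_ (W ⊗ X) Y Z).hom ≫ (α_ W X (Y ⊗ Z)).hom
            ≫ W ◁ (α_ X Y Z).inv ≫ (G.g W ((X ⊗ Y) ⊗ Z)).symm h)) from by monoidal]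
    rw [G.g_natX]
    -- transport the outer g on the LHS
    rw [show (α_ (G.dd Y) (G.dd Z ⊗ W) X).hom ≫ G.dd Y ◁ (α_ (G.dd Z) W X).hom
          ≫ G.g (G.dd Z ⊗ W ⊗ X) Y ((α_ (G.dd Z) (W ⊗ X) Y).hom
            ≫ G.g ((W ⊗ X) ⊗ Y) Z ((α_ (W ⊗ X) Y Z).hom ≫ (α_ W X (Y ⊗ Z)).hom
              ≫ W ◁ (α_ X Y Z).inv ≫ (G.g W ((X ⊗ Y) ⊗ Z)).symm h))
        = (α_ (G.dd Y) (G.dd Z) W).inv ▷ X ≫ ((α_ (G.dd Y ⊗ G.dd Z) W X).hom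
          ≫ (α_ (G.dd Y) (G.dd Z) (W ⊗ X)).hom
          ≫ G.g (G.dd Z ⊗ W ⊗ X) Y ((α_ (G.dd Z) (W ⊗ X) Y).hom
            ≫ G.g ((W ⊗ X) ⊗ Y) Z ((α_ (W ⊗ X) Y Z).hom ≫ (α_ W X (Y ⊗ Z)).hom
              ≫ W ◁ (α_ X Y Z).inv ≫ (G.g W ((X ⊗ Y) ⊗ Z)).symm h)))
          from by monoidal]
    rw [G.g_natX]
    monoidal
  have h2 : ((G.dd X ◁ (u Y Z).inv) ≫ (u X (Y ⊗ Z)).inv ≫ G.ddF.map (α_ X Y Z).inv)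
      ≫ G.ddF.map (α_ X Y Z).hom ≫ (u X (Y ⊗ Z)).hom ≫ (G.dd X ◁ (u Y Z).hom)
      = 𝟙 _ := by
    simp only [Category.assoc, ← Functor.map_comp_assoc, Iso.inv_hom_id,
      Functor.map_id, Category.id_comp, Iso.inv_hom_id_assoc]
    erw [Category.assoc, ← Functor.map_comp_assoc, Iso.inv_hom_id, CategoryTheory.Functor.map_id,
      Category.id_comp, Iso.inv_hom_id_assoc]
    simp [← MonoidalCategory.whiskerLeft_comp]
  rw [← E] at h2
  calc (u (X ⊗ Y) Z).hom ≫ ((u X Y).hom ▷ G.dd Z)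
        ≫ (α_ (G.dd X) (G.dd Y) (G.dd Z)).hom
      = ((u (X ⊗ Y) Z).hom ≫ ((u X Y).hom ▷ G.dd Z)
          ≫ (α_ (G.dd X) (G.dd Y) (G.dd Z)).hom)
        ≫ (((α_ (G.dd X) (G.dd Y) (G.dd Z)).inv ≫ ((u X Y).inv ▷ G.dd Z)
            ≫ (u (X ⊗ Y) Z).inv)
          ≫ (G.ddF.map (α_ X Y Z).hom ≫ (u X (Y ⊗ Z)).hom
            ≫ (G.dd X ◁ (u Y Z).hom))) := by
        erw [h2, Category.comp_id]
    _ = _ := by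
        simp
        rfl

end GVCat

/-- Let `(M, K)` be a Grothendieck–Verdier category, and let `u` be the
unique natural isomorphism `D²(Y₁ ⊗ Y₂) ≅ D²Y₁ ⊗ D²Y₂` with the stated characterization
via `g`. Then `u` defines a monoidal structure on the functor `D²` (it is natural,
compatible with the associativity constraints, and compatible with the unit), and the
corresponding isomorphism `𝟙 ≅ D² 𝟙` equals the canonical one. -/
theorem stmt9 {M : Type u} [Category.{v} M] [MonoidalCategory M] (G : GVCat M)
    (u : ∀ Y₁ Y₂ : M, G.dd (Y₁ ⊗ Y₂) ≅ G.dd Y₁ ⊗ G.dd Y₂)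
    (hu : G.UChar u)
    (η : 𝟙_ M ⟶ G.dd (𝟙_ M))
    (hη : G.EtaChar η) :
    -- the unit isomorphism is the canonical one, and it is invertible
    IsIso η
    -- naturality of `u`
    ∧ (∀ {Y₁ Y₂ Z₁ Z₂ : M} (q₁ : Y₁ ⟶ Z₁) (q₂ : Y₂ ⟶ Z₂),
        G.ddF.map (q₁ ⊗ₘ q₂) ≫ (u Z₁ Z₂).hom
          = (u Y₁ Y₂).hom ≫ (G.ddF.map q₁ ⊗ₘ G.ddF.map q₂))
    -- compatibility with the associativity constraints
    ∧ (∀ X Y Z : M,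
        (u (X ⊗ Y) Z).hom ≫ ((u X Y).hom ▷ G.dd Z)
            ≫ (α_ (G.dd X) (G.dd Y) (G.dd Z)).hom
          = G.ddF.map (α_ X Y Z).hom ≫ (u X (Y ⊗ Z)).hom ≫ (G.dd X ◁ (u Y Z).hom))
    -- compatibility with the left unit constraint
    ∧ (∀ X : M, (λ_ (G.dd X)).hom
          = (η ▷ G.dd X) ≫ (u (𝟙_ M) X).inv ≫ G.ddF.map (λ_ X).hom)
    -- compatibility with the right unit constraint
    ∧ (∀ X : M, (ρ_ (G.dd X)).hom
          = (G.dd X ◁ η) ≫ (u X (𝟙_ M)).inv ≫ G.ddF.map (ρ_ X).hom) := by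
  have hIso : IsIso η := G.eta_iso η hη
  exact ⟨hIso,
    fun {Y₁ Y₂ Z₁ Z₂} q₁ q₂ => G.u_nat u hu q₁ q₂,
    fun X Y Z => G.assoc_compat u hu X Y Z,
    fun X => G.left_unit u hu η hη X,
    fun X => G.right_unit u hu η hη X⟩
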